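/- arXiv:0907.2090 — 6 statements merged into one kernel-verified Lean document; each statement's English description precedes it below -/
import Mathlib

section
/- If G is a finite abelian group with at least two elements and there exists a (k,l) fractional code for S_3' over G, then 3k ≤ 2l. (This is the converse part of the paper's theorem that the capacity of S_3' is 2/3: any achievable rate k/l is at most 2/3.) -/
/-!
Terminal `t₃` sees only the two bottleneck messages `f(X₁,X₃)` and `g(X₂,X₃)`, yet these
already determine all three sources: feeding `X₁ = 0` to terminal `t₂` shows that `g(X₂,X₃)`
determines `X₂ + X₃`, terminal `t₃` gives the total sum and hence `X₁`, and feeding `X₂ = 0` to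
terminal `t₁` shows that `X₁` together with `f(X₁,X₃)` determines `X₃`. So `|G|^{3k} ≤ |G|^{2l}`.
-/

/-- A `(k,l)` fractional code for the sum-network `S₃'` over an abelian group `G`. -/
def S3'Code (G : Type*) [AddCommGroup G] (k l : ℕ) : Prop :=
  ∃ (a a' : (Fin k → G) → (Fin l → G))
    (m f g : (Fin k → G) → (Fin k → G) → (Fin l → G))
    (d₁ : (Fin l → G) → (Fin l → G) → (Fin l → G) → (Fin k → G))
    (d₂ d₃ : (Fin l → G) → (Fin l → G) → (Fin k → G)),
    (∀ x₁ x₂ x₃ : Fin k → G, d₁ (a' x₁) (m x₁ x₂) (f x₁ x₃) = x₁ + x₂ + x₃) ∧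
    (∀ x₁ x₂ x₃ : Fin k → G, d₂ (a x₁) (g x₂ x₃) = x₁ + x₂ + x₃) ∧
    (∀ x₁ x₂ x₃ : Fin k → G, d₃ (f x₁ x₃) (g x₂ x₃) = x₁ + x₂ + x₃)

theorem S3'Code.exists_injective_bottleneck {G : Type*} [AddCommGroup G] {k l : ℕ}
    (h : S3'Code G k l) :
    ∃ Φ : (Fin k → G) × (Fin k → G) × (Fin k → G) → (Fin l → G) × (Fin l → G),
      Function.Injective Φ := by
  obtain ⟨a, a', m, f, g, d₁, d₂, d₃, h₁, h₂, h₃⟩ := h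
  refine ⟨fun x => (f x.1 x.2.2, g x.2.1 x.2.2), ?_⟩
  rintro ⟨x₁, x₂, x₃⟩ ⟨y₁, y₂, y₃⟩ hxy
  obtain ⟨hf, hg⟩ := Prod.mk.inj hxy
  have h23 : x₂ + x₃ = y₂ + y₃ :=
    calc x₂ + x₃ = d₂ (a 0) (g x₂ x₃) := by rw [h₂]; abel
      _ = d₂ (a 0) (g y₂ y₃) := by rw [hg]
      _ = y₂ + y₃ := by rw [h₂]; abel
  have hsum : x₁ + x₂ + x₃ = y₁ + y₂ + y₃ := by rw [← h₃, ← h₃, hf, hg]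
  have e₁ : x₁ = y₁ :=
    calc x₁ = (x₁ + x₂ + x₃) - (x₂ + x₃) := by abel
      _ = (y₁ + y₂ + y₃) - (y₂ + y₃) := by rw [hsum, h23]
      _ = y₁ := by abel
  have e₃ : x₃ = y₃ :=
    calc x₃ = d₁ (a' x₁) (m x₁ 0) (f x₁ x₃) - x₁ := by rw [h₁]; abel
      _ = d₁ (a' y₁) (m y₁ 0) (f y₁ y₃) - y₁ := by rw [hf, e₁]
      _ = y₃ := by rw [h₁]; abel
  have e₂ : x₂ = y₂ := add_right_cancel (e₃ ▸ h23)
  rw [e₁, e₂, e₃]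

theorem S3'_rate_le_two_thirds (G : Type*) [AddCommGroup G] [Fintype G]
    (hG : 2 ≤ Fintype.card G) (k l : ℕ) (h : S3'Code G k l) :
    3 * k ≤ 2 * l := by
  obtain ⟨Φ, hΦ⟩ := h.exists_injective_bottleneck
  have hcard := Fintype.card_le_of_injective Φ hΦ
  simp only [Fintype.card_prod, Fintype.card_fun, Fintype.card_fin, ← pow_add] at hcard
  have := (Nat.pow_le_pow_iff_right (by omega)).mp hcard
  omega
end

section
/- If G is a finite abelian group with at least two elements, l ≥ 1, and there exists a (k,l) fractional code for S_3' over G, then the rate satisfies (k : ℚ)/l ≤ 2/3. -/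
namespace S3'Code

variable {G : Type*} [AddCommGroup G] {k l : ℕ}

theorem exists_injective (h : S3'Code G k l) :
    ∃ F : (Fin k → G) × (Fin k → G) × (Fin k → G) → (Fin l → G) × (Fin l → G),
      Function.Injective F := by
  obtain ⟨a, a', m, f, g, d₁, d₂, d₃, h₁, h₂, h₃⟩ := h
  refine ⟨fun x => (f x.1 x.2.2, g x.2.1 x.2.2), ?_⟩
  rintro ⟨x₁, x₂, x₃⟩ ⟨y₁, y₂, y₃⟩ hxy
  obtain ⟨hf, hg⟩ := Prod.mk.inj hxy
  have h₂₃ : x₂ + x₃ = y₂ + y₃ := by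
    have := h₂ 0 x₂ x₃
    rw [hg, h₂ 0 y₂ y₃] at this
    simpa using this.symm
  have h₁ₓ : x₁ = y₁ := by
    have := h₃ x₁ x₂ x₃
    rw [hf, hg, h₃ y₁ y₂ y₃, add_assoc, add_assoc, h₂₃] at this
    exact (add_right_cancel this).symm
  have h₃ₓ : x₃ = y₃ := by
    have := h₁ x₁ 0 x₃
    rw [hf, h₁ₓ, h₁ y₁ 0 y₃] at this
    simpa using this.symm
  have h₂ₓ : x₂ = y₂ := by
    have := h₃ 0 x₂ x₃
    rw [hg, h₃ₓ, h₃ 0 y₂ y₃] at this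
    simpa using this.symm
  rw [h₁ₓ, h₂ₓ, h₃ₓ]

theorem card_pow_le [Fintype G] (h : S3'Code G k l) :
    Fintype.card G ^ (3 * k) ≤ Fintype.card G ^ (2 * l) := by
  obtain ⟨F, hF⟩ := h.exists_injective
  have hcard := Fintype.card_le_of_injective F hF
  simp only [Fintype.card_prod, Fintype.card_fun, Fintype.card_fin] at hcard
  rw [show 3 * k = k + (k + k) by ring, show 2 * l = l + l by ring, pow_add, pow_add, pow_add]
  exact hcard

theorem three_mul_le [Fintype G] (hG : 2 ≤ Fintype.card G) (h : S3'Code G k l) :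
    3 * k ≤ 2 * l :=
  (Nat.pow_le_pow_iff_right hG).mp h.card_pow_le

end S3'Code

theorem S3'_rational_rate_le_two_thirds_general (G : Type*) [AddCommGroup G] [Fintype G]
    (hG : 2 ≤ Fintype.card G) (k l : ℕ) (h : S3'Code G k l) :
    (k : ℚ) / l ≤ 2 / 3 := by
  have h3k : ((3 * k : ℕ) : ℚ) ≤ (2 * l : ℕ) := by exact_mod_cast h.three_mul_le hG
  push_cast at h3k
  exact div_le_of_le_mul₀ (Nat.cast_nonneg l) (by norm_num) (by linarith)

theorem S3'_rational_rate_le_two_thirds (G : Type*) [AddCommGroup G] [Fintype G]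
    (hG : 2 ≤ Fintype.card G) (k l : ℕ) (hl : 1 ≤ l) (h : S3'Code G k l) :
    (k : ℚ) / l ≤ 2 / 3 :=
  S3'_rational_rate_le_two_thirds_general G hG k l h
end

section
/- If G is a finite abelian group with at least two elements and there exists a (k,l) fractional code for S_3 over G, then 3k ≤ 2l. (This is the converse part of the paper's theorem that the capacity of S_3 is 2/3.) -/
/-!
Terminal `t₃` recovers `x₁ + x₂ + x₃` from the two bottleneck messages, while `t₁` and `t₂`
recover `x₁ + x₃` and `x₂ + x₃` from one message each (feed them `0` on the direct edge). These
three sums determine `(x₁, x₂, x₃)`, so the pair of messages is an injective function of the three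
source blocks, and counting gives `|G| ^ (3k) ≤ |G| ^ (2l)`.
-/

/-- A `(k,l)` fractional code for the sum-network `S₃` over an abelian group `G`. -/
def S3Code (G : Type*) [AddCommGroup G] (k l : ℕ) : Prop :=
  ∃ (f g : (Fin k → G) → (Fin k → G) → (Fin l → G))
    (d₁ d₂ : (Fin l → G) → (Fin k → G) → (Fin k → G))
    (d₃ : (Fin l → G) → (Fin l → G) → (Fin k → G)),
    (∀ x₁ x₂ x₃ : Fin k → G, d₁ (f x₁ x₃) x₂ = x₁ + x₂ + x₃) ∧
    (∀ x₁ x₂ x₃ : Fin k → G, d₂ (g x₂ x₃) x₁ = x₁ + x₂ + x₃) ∧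
    (∀ x₁ x₂ x₃ : Fin k → G, d₃ (f x₁ x₃) (g x₂ x₃) = x₁ + x₂ + x₃)

theorem eq_and_eq_and_eq_of_add_eq {M : Type*} [AddCommGroup M] {a b c a' b' c' : M}
    (hac : a + c = a' + c') (hbc : b + c = b' + c') (habc : a + b + c = a' + b' + c') :
    a = a' ∧ b = b' ∧ c = c' := by
  have hc : c = c' :=
    calc c = (a + c) + (b + c) - (a + b + c) := by abel
      _ = (a' + c') + (b' + c') - (a' + b' + c') := by rw [hac, hbc, habc]
      _ = c' := by abel
  subst hc
  exact ⟨add_right_cancel hac, add_right_cancel hbc, rfl⟩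

theorem S3Code.exists_injective {G : Type*} [AddCommGroup G] {k l : ℕ} (h : S3Code G k l) :
    ∃ F : (Fin k → G) × (Fin k → G) × (Fin k → G) → (Fin l → G) × (Fin l → G),
      Function.Injective F := by
  obtain ⟨f, g, d₁, d₂, d₃, h₁, h₂, h₃⟩ := h
  refine ⟨fun x => (f x.1 x.2.2, g x.2.1 x.2.2), ?_⟩
  rintro ⟨a, b, c⟩ ⟨a', b', c'⟩ hfg
  obtain ⟨hf, hg⟩ : f a c = f a' c' ∧ g b c = g b' c' := Prod.mk.inj hfg
  have hac : a + 0 + c = a' + 0 + c' := by rw [← h₁ a 0 c, hf, h₁]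
  have hbc : 0 + b + c = 0 + b' + c' := by rw [← h₂ 0 b c, hg, h₂]
  have habc : a + b + c = a' + b' + c' := by rw [← h₃, hf, hg, h₃]
  rw [add_zero, add_zero] at hac
  rw [zero_add, zero_add] at hbc
  obtain ⟨rfl, rfl, rfl⟩ := eq_and_eq_and_eq_of_add_eq hac hbc habc
  rfl

theorem S3Code.card_pow_le {G : Type*} [AddCommGroup G] [Fintype G] {k l : ℕ}
    (h : S3Code G k l) : Fintype.card G ^ (3 * k) ≤ Fintype.card G ^ (2 * l) := by
  obtain ⟨F, hF⟩ := h.exists_injective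
  have hcard := Fintype.card_le_of_injective F hF
  simp only [Fintype.card_prod, Fintype.card_fun, Fintype.card_fin] at hcard
  calc Fintype.card G ^ (3 * k)
      = Fintype.card G ^ k * (Fintype.card G ^ k * Fintype.card G ^ k) := by ring
    _ ≤ Fintype.card G ^ l * Fintype.card G ^ l := hcard
    _ = Fintype.card G ^ (2 * l) := by ring

theorem S3_rate_le_two_thirds (G : Type*) [AddCommGroup G] [Fintype G]
    (hG : 2 ≤ Fintype.card G) (k l : ℕ) (h : S3Code G k l) :
    3 * k ≤ 2 * l :=
  (Nat.pow_le_pow_iff_right hG).mp h.card_pow_le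
end

section
/- If G is a finite abelian group with at least two elements, then for every k ≥ 1 there is no (k,k) fractional code for S_3 over G; in particular, the sum-network S_3 is not solvable (has no rate-1 vector or scalar solution) over any such G. -/
theorem apply_eq_apply_add_zero_of_decode_add {A : Type*} [AddZeroClass A] [Finite A]
    {φ : A → A → A} {δ : A → A} (h : ∀ x y, δ (φ x y) = x + y) (x y : A) :
    φ x y = φ (x + y) 0 := by
  have hδ : Function.Surjective δ := fun s => ⟨φ s 0, by rw [h, add_zero]⟩
  apply Finite.injective_iff_surjective.mpr hδ
  rw [h, h, add_zero]

theorem subsingleton_of_S3_decoders {A : Type*} [AddGroup A] [Finite A]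
    {f g : A → A → A} {d₁ d₂ d₃ : A → A → A}
    (h₁ : ∀ x₁ x₂ x₃, d₁ (f x₁ x₃) x₂ = x₁ + x₂ + x₃)
    (h₂ : ∀ x₁ x₂ x₃, d₂ (g x₂ x₃) x₁ = x₁ + x₂ + x₃)
    (h₃ : ∀ x₁ x₂ x₃, d₃ (f x₁ x₃) (g x₂ x₃) = x₁ + x₂ + x₃) :
    Subsingleton A := by
  have hf := apply_eq_apply_add_zero_of_decode_add (δ := fun m => d₁ m 0)
    fun x₁ x₃ => by simpa using h₁ x₁ 0 x₃
  have hg := apply_eq_apply_add_zero_of_decode_add (δ := fun m => d₂ m 0)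
    fun x₂ x₃ => by simpa using h₂ 0 x₂ x₃
  refine subsingleton_of_forall_eq 0 fun v => ?_
  have h_double : d₃ (f v 0) (g v 0) = v + v := by simpa using h₃ v v 0
  have h_single : d₃ (f v 0) (g v 0) = v := by
    simpa [hf 0 v, hg 0 v] using h₃ 0 0 v
  simpa using h_double.symm.trans h_single

theorem S3_not_solvable (G : Type*) [AddCommGroup G] [Fintype G]
    (hG : 2 ≤ Fintype.card G) :
    ∀ k : ℕ, 1 ≤ k → ¬ S3Code G k k := by
  rintro k hk ⟨f, g, d₁, d₂, d₃, h₁, h₂, h₃⟩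
  have : Nontrivial G := Fintype.one_lt_card_iff_nontrivial.mp hG
  have : Nonempty (Fin k) := Fin.pos_iff_nonempty.mp hk
  exact not_subsingleton (Fin k → G) (subsingleton_of_S3_decoders h₁ h₂ h₃)
end

section
/- If G is a finite abelian group with at least two elements, then for every k ≥ 1 there is no (k,k) fractional code for S_3' over G; in particular, the sum-network S_3' is not solvable at rate 1 over any such G. -/
open Function

lemma factorsThrough_of_decode_of_surjective {α V : Type*} [Finite V] {d : V → V} {e p : α → V}
    (hd : ∀ z, d (e z) = p z) (hp : Surjective p) : FactorsThrough e p := by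
  have hd_surj : Surjective d := fun v =>
    let ⟨z, hz⟩ := hp v; ⟨e z, (hd z).trans hz⟩
  intro z z' hzz'
  apply Finite.injective_iff_surjective.mpr hd_surj
  rw [hd, hd, hzz']

theorem S3'_not_rate_one_solvable (G : Type*) [AddCommGroup G] [Fintype G]
    (hG : 2 ≤ Fintype.card G) :
    ∀ k : ℕ, 1 ≤ k → ¬ S3'Code G k k := by
  rintro k hk ⟨a, a', m, f, g, d₁, d₂, d₃, h₁, h₂, h₃⟩
  have hg : ∀ x₂ x₃, g x₂ x₃ = g (x₂ + x₃) 0 := by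
    have h := factorsThrough_of_decode_of_surjective (d := d₂ (a 0))
      (e := fun z : (Fin k → G) × (Fin k → G) => g z.1 z.2) (p := fun z => z.1 + z.2)
      (fun z => by simpa using h₂ 0 z.1 z.2) (fun v => ⟨(v, 0), add_zero v⟩)
    exact fun x₂ x₃ => h (a := (x₂, x₃)) (b := (x₂ + x₃, 0)) (add_zero _).symm
  have hf : ∀ x₁ x₃, f x₁ x₃ = f x₁ 0 := by
    have h := factorsThrough_of_decode_of_surjective (d := fun v => d₃ v (g 0 0))
      (e := fun z : (Fin k → G) × (Fin k → G) => f z.1 z.2) (p := Prod.fst)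
      (fun z => by simpa [hg (-z.2) z.2] using h₃ z.1 (-z.2) z.2) (fun v => ⟨(v, 0), rfl⟩)
    exact fun x₁ x₃ => h (a := (x₁, x₃)) (b := (x₁, 0)) rfl
  have : Nontrivial G := Fintype.one_lt_card_iff_nontrivial.mp hG
  have : NeZero k := ⟨Nat.one_le_iff_ne_zero.mp hk⟩
  obtain ⟨x₃, hx₃⟩ := exists_ne (0 : Fin k → G)
  have h_blind : d₁ (a' 0) (m 0 0) (f 0 0) = x₃ := by simpa [hf] using h₁ 0 0 x₃
  exact hx₃ (h_blind.symm.trans (by simpa using h₁ 0 0 0))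
end

section
/- For every abelian group G there exists a (2,3) fractional code for S_3 over G; that is, the rate 2/3 is achievable on the sum-network S_3 over every abelian group. (For instance, one may take f applied to (x_1,x_3) to be the triple (x_1(1)+x_3(1), x_1(2), x_1(1)+x_1(2)+x_3(1)+x_3(2)) and g applied to (x_2,x_3) to be (x_2(1)+x_3(1), x_2(2)+x_3(2), x_2(1)+x_2(2)), with suitable decoders.) -/
/-!
Terminal `t₁` reads `x₁ 0 + x₃ 0` directly from `f` and `x₁ 1 + x₃ 1` as the difference of
its parity check and its first symbol; terminal `t₂` reads `x₂ + x₃` directly from `g`.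
Terminal `t₃` gets `x₁ 1` from `f` and `x₂ 1 + x₃ 1` from `g`; subtracting these from the two
parity checks leaves `x₁ 0 + x₃ 0 + x₃ 1` and `x₂ 0 - x₃ 1`, whose sum is the first coordinate
of the total.
-/

namespace S3Code

variable {G : Type*} [AddCommGroup G]

def encode₁ (x₁ x₃ : Fin 2 → G) : Fin 3 → G :=
  ![x₁ 0 + x₃ 0, x₁ 1, x₁ 0 + x₁ 1 + x₃ 0 + x₃ 1]

def encode₂ (x₂ x₃ : Fin 2 → G) : Fin 3 → G :=
  ![x₂ 0 + x₃ 0, x₂ 1 + x₃ 1, x₂ 0 + x₂ 1]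

def decode₁ (m : Fin 3 → G) (x₂ : Fin 2 → G) : Fin 2 → G :=
  ![m 0 + x₂ 0, m 2 - m 0 + x₂ 1]

def decode₂ (n : Fin 3 → G) (x₁ : Fin 2 → G) : Fin 2 → G :=
  ![n 0 + x₁ 0, n 1 + x₁ 1]

def decode₃ (m n : Fin 3 → G) : Fin 2 → G :=
  ![m 2 - m 1 + (n 2 - n 1), m 1 + n 1]

theorem decode₁_encode₁ (x₁ x₂ x₃ : Fin 2 → G) :
    decode₁ (encode₁ x₁ x₃) x₂ = x₁ + x₂ + x₃ := by
  ext i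
  fin_cases i <;> simp [decode₁, encode₁] <;> abel

theorem decode₂_encode₂ (x₁ x₂ x₃ : Fin 2 → G) :
    decode₂ (encode₂ x₂ x₃) x₁ = x₁ + x₂ + x₃ := by
  ext i
  fin_cases i <;> simp [decode₂, encode₂] <;> abel

theorem decode₃_encode (x₁ x₂ x₃ : Fin 2 → G) :
    decode₃ (encode₁ x₁ x₃) (encode₂ x₂ x₃) = x₁ + x₂ + x₃ := by
  ext i
  fin_cases i <;> simp [decode₃, encode₁, encode₂] <;> abel

end S3Code

theorem S3_two_three_code (G : Type*) [AddCommGroup G] : S3Code G 2 3 :=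
  ⟨S3Code.encode₁, S3Code.encode₂, S3Code.decode₁, S3Code.decode₂, S3Code.decode₃,
    S3Code.decode₁_encode₁, S3Code.decode₂_encode₂, S3Code.decode₃_encode⟩
end
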